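/- arXiv:1403.2647 — 3 statements merged into one kernel-verified Lean document; each statement's English description precedes it below -/
import Mathlib

section
/- Let 1 < p < ∞ and let (X_i)_{i∈I} be a family of real Banach spaces each having the Schur property (in particular, this applies to any family of finite-dimensional Banach spaces). Then R([⊕_{i∈I} X_i]_p) < 2. -/
open Filter Topology MeasureTheory
open scoped ENNReal ZeroAtInfty

noncomputable section

/-- A sequence in a Banach space is weakly null if `φ (x n) → 0` for every
continuous linear functional `φ`. -/
def WeaklyNull {X : Type*} [NormedAddCommGroup X] [NormedSpace ℝ X] (u : ℕ → X) : Prop :=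
  ∀ φ : X →L[ℝ] ℝ, Tendsto (fun n => φ (u n)) atTop (𝓝 0)

/-- The Schur property: every weakly null sequence converges to `0` in norm. -/
def SchurProperty (X : Type*) [NormedAddCommGroup X] [NormedSpace ℝ X] : Prop :=
  ∀ u : ℕ → X, WeaklyNull u → Tendsto (fun n => ‖u n‖) atTop (𝓝 0)

/-- The Opial modulus `r_X(c)`. -/
def opialModulus (X : Type*) [NormedAddCommGroup X] [NormedSpace ℝ X] (c : ℝ) : ℝ :=
  sInf { d : ℝ | ∃ (x : X) (u : ℕ → X), c ≤ ‖x‖ ∧ WeaklyNull u ∧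
    1 ≤ liminf (fun n => ‖u n‖) atTop ∧
    d = liminf (fun n => ‖u n - x‖) atTop - 1 }

/-- The modulus `η_X(ε, R)`. -/
def etaModulus (X : Type*) [NormedAddCommGroup X] [NormedSpace ℝ X] (ε R : ℝ) : ℝ :=
  sInf { d : ℝ | ∃ (x : X) (u : ℕ → X), ε ≤ ‖x‖ ∧ WeaklyNull u ∧
    limsup (fun n => ‖u n‖) atTop ≤ R ∧
    d = liminf (fun n => ‖u n - x‖) atTop - liminf (fun n => ‖u n‖) atTop }

/-- The García-Falset coefficient `R(X)`. -/
def garciaFalset (X : Type*) [NormedAddCommGroup X] [NormedSpace ℝ X] : ℝ :=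
  sSup { a : ℝ | ∃ (x : X) (u : ℕ → X), ‖x‖ ≤ 1 ∧ (∀ n, ‖u n‖ ≤ 1) ∧ WeaklyNull u ∧
    a = liminf (fun n => ‖u n + x‖) atTop }

/-- The degree of WORTHness `w(X)`. -/
def worthDegree (X : Type*) [NormedAddCommGroup X] [NormedSpace ℝ X] : ℝ :=
  sSup { r : ℝ | 0 ≤ r ∧ ∀ (x : X) (u : ℕ → X), WeaklyNull u →
    r * liminf (fun n => ‖u n + x‖) atTop ≤ liminf (fun n => ‖u n - x‖) atTop }

/-- Gao's modulus of u-convexity `u_X(ε)`. -/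
def uModulus (X : Type*) [NormedAddCommGroup X] [NormedSpace ℝ X] (ε : ℝ) : ℝ :=
  sInf { d : ℝ | ∃ (x y : X) (φ : X →L[ℝ] ℝ), ‖x‖ = 1 ∧ ‖y‖ = 1 ∧ ‖φ‖ = 1 ∧
    φ x = 1 ∧ φ y ≤ 1 - ε ∧ d = 1 - ‖(2⁻¹ : ℝ) • (x + y)‖ }

/-- The c₀-sum of a family of Banach spaces: the closure, inside the ℓ∞-sum, of the
set of finitely supported families. -/
def c0Sum {I : Type*} (X : I → Type*) [∀ i, NormedAddCommGroup (X i)]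
    [∀ i, NormedSpace ℝ (X i)] : Submodule ℝ (lp X ∞) :=
  (Submodule.span ℝ { f : lp X ∞ | Set.Finite { i | (f : ∀ i, X i) i ≠ 0 } }).topologicalClosure

end

/-!
By the Schur property of the summands, a weakly null sequence `(uₙ)` in `ℓᵖ(Xᵢ)` tends to `0`
coordinatewise in norm, so on any finite set `s` of indices its restriction `Pₛ uₙ` tends to `0`.
Choosing `s` so that `x - Pₛ x` is small, `uₙ + x` is, up to small errors, the sum of the disjointly
supported vectors `uₙ - Pₛ uₙ` and `Pₛ x` of the unit ball; as `p`-th powers of norms add over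
disjoint supports, the norm of that sum is at most `(1 + 1)^(1/p)`. Hence `R(ℓᵖ(Xᵢ)) ≤ 2^(1/p) < 2`.
-/

theorem WeaklyNull.map {X Y : Type*} [NormedAddCommGroup X] [NormedSpace ℝ X]
    [NormedAddCommGroup Y] [NormedSpace ℝ Y] {u : ℕ → X} (hu : WeaklyNull u) (T : X →L[ℝ] Y) :
    WeaklyNull (fun n => T (u n)) :=
  fun φ => hu (φ.comp T)

namespace lp

variable {I : Type*} {X : I → Type*} [∀ i, NormedAddCommGroup (X i)] {p : ℝ≥0∞}

theorem norm_add_rpow_of_disjoint (hp : 0 < p.toReal) {f g : lp X p}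
    (h : ∀ i, f i = 0 ∨ g i = 0) :
    ‖f + g‖ ^ p.toReal = ‖f‖ ^ p.toReal + ‖g‖ ^ p.toReal := by
  refine (lp.hasSum_norm hp (f + g)).unique ?_
  convert (lp.hasSum_norm hp f).add (lp.hasSum_norm hp g) using 2 with i
  rcases h i with h' | h' <;> simp [h', Real.zero_rpow hp.ne']

theorem sum_single_apply [DecidableEq I] (f : ∀ i, X i) (s : Finset I) (j : I) :
    (∑ i ∈ s, lp.single p i (f i) : lp X p) j = if j ∈ s then f j else 0 := by
  rw [lp.coeFn_sum, Finset.sum_apply]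
  simp [lp.single_apply]

variable [Fact (1 ≤ p)]

theorem norm_add_le_of_disjoint (hp : 0 < p.toReal) {f g : lp X p}
    (h : ∀ i, f i = 0 ∨ g i = 0) (hf : ‖f‖ ≤ 1) (hg : ‖g‖ ≤ 1) :
    ‖f + g‖ ≤ 2 ^ p.toReal⁻¹ := by
  have hfg : ‖f + g‖ ^ p.toReal ≤ 2 := by
    rw [norm_add_rpow_of_disjoint hp h]
    linarith [Real.rpow_le_one (norm_nonneg f) hf hp.le,
      Real.rpow_le_one (norm_nonneg g) hg hp.le]
  calc ‖f + g‖ = (‖f + g‖ ^ p.toReal) ^ p.toReal⁻¹ :=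
        (Real.rpow_rpow_inv (norm_nonneg _) hp.ne').symm
    _ ≤ 2 ^ p.toReal⁻¹ := by gcongr

variable [DecidableEq I]

theorem norm_sub_sum_single_le (hp : 0 < p.toReal) (f : lp X p) (s : Finset I) :
    ‖f - ∑ i ∈ s, lp.single p i (f i)‖ ≤ ‖f‖ := by
  rw [← Real.rpow_le_rpow_iff (norm_nonneg _) (norm_nonneg _) hp, lp.norm_compl_sum_single hp]
  linarith [Finset.sum_nonneg fun i (_ : i ∈ s) => Real.rpow_nonneg (norm_nonneg (f i)) p.toReal]

theorem norm_sum_single_le (hp : 0 < p.toReal) (f : lp X p) (s : Finset I) :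
    ‖∑ i ∈ s, lp.single p i (f i)‖ ≤ ‖f‖ := by
  rw [← Real.rpow_le_rpow_iff (norm_nonneg _) (norm_nonneg _) hp, lp.norm_sum_single hp,
    ← lp.norm_sub_norm_compl_sub_single hp]
  linarith [Real.rpow_nonneg (norm_nonneg (f - ∑ i ∈ s, lp.single p i (f i))) p.toReal]

theorem norm_add_le_of_norm_le_one (hp : 0 < p.toReal) {u x : lp X p} (hu : ‖u‖ ≤ 1)
    (hx : ‖x‖ ≤ 1) (s : Finset I) :
    ‖u + x‖ ≤ ‖∑ i ∈ s, lp.single p i (u i)‖ + 2 ^ p.toReal⁻¹ +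
      ‖x - ∑ i ∈ s, lp.single p i (x i)‖ := by
  set Pu := ∑ i ∈ s, lp.single p i (u i)
  set Px := ∑ i ∈ s, lp.single p i (x i)
  have hdisj : ∀ i, (u - Pu) i = 0 ∨ Px i = 0 := by
    intro i
    by_cases hi : i ∈ s
    · left
      rw [lp.coeFn_sub, Pi.sub_apply, sum_single_apply, if_pos hi, sub_self]
    · right
      rw [sum_single_apply, if_neg hi]
  have hmid : ‖(u - Pu) + Px‖ ≤ 2 ^ p.toReal⁻¹ :=
    norm_add_le_of_disjoint hp hdisj ((norm_sub_sum_single_le hp u s).trans hu)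
      ((norm_sum_single_le hp x s).trans hx)
  calc ‖u + x‖ = ‖Pu + ((u - Pu) + Px) + (x - Px)‖ := by congr 1; abel
    _ ≤ ‖Pu‖ + ‖(u - Pu) + Px‖ + ‖x - Px‖ := norm_add₃_le
    _ ≤ ‖Pu‖ + 2 ^ p.toReal⁻¹ + ‖x - Px‖ := by gcongr

variable [∀ i, NormedSpace ℝ (X i)]

theorem tendsto_norm_sum_single_of_weaklyNull (hX : ∀ i, SchurProperty (X i))
    {u : ℕ → lp X p} (hu : WeaklyNull u) (s : Finset I) :
    Tendsto (fun n => ‖∑ i ∈ s, lp.single p i (u n i)‖) atTop (𝓝 0) := by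
  have hp : 0 < p := zero_lt_one.trans_le Fact.out
  have hbound : ∀ n, ‖∑ i ∈ s, lp.single p i (u n i)‖ ≤ ∑ i ∈ s, ‖u n i‖ := fun n =>
    (norm_sum_le _ _).trans_eq (Finset.sum_congr rfl fun i _ => lp.norm_single hp i _)
  have hsum : Tendsto (fun n => ∑ i ∈ s, ‖u n i‖) atTop (𝓝 0) := by
    have hcoord : ∀ i, WeaklyNull fun n => u n i := fun i => hu.map (lp.evalCLM ℝ X p i)
    simpa using tendsto_finsetSum s fun i _ => hX i _ (hcoord i)
  exact squeeze_zero (fun n => norm_nonneg _) hbound hsum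

theorem liminf_norm_add_le (hp : p ≠ ⊤) (hX : ∀ i, SchurProperty (X i)) {u : ℕ → lp X p}
    (hu : WeaklyNull u) (hu1 : ∀ n, ‖u n‖ ≤ 1) {x : lp X p} (hx : ‖x‖ ≤ 1) (s : Finset I) :
    liminf (fun n => ‖u n + x‖) atTop ≤
      2 ^ p.toReal⁻¹ + ‖x - ∑ i ∈ s, lp.single p i (x i)‖ := by
  have hq : 0 < p.toReal := ENNReal.toReal_pos (zero_lt_one.trans_le Fact.out).ne' hp
  set C := 2 ^ p.toReal⁻¹ + ‖x - ∑ i ∈ s, lp.single p i (x i)‖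
  have hbound : Tendsto (fun n => ‖∑ i ∈ s, lp.single p i (u n i)‖ + C) atTop (𝓝 C) := by
    simpa using (tendsto_norm_sum_single_of_weaklyNull hX hu s).add_const C
  calc liminf (fun n => ‖u n + x‖) atTop
      ≤ liminf (fun n => ‖∑ i ∈ s, lp.single p i (u n i)‖ + C) atTop := by
        refine liminf_le_liminf (Eventually.of_forall fun n => ?_)
          (isBoundedUnder_of ⟨0, fun n => norm_nonneg _⟩)
          hbound.isBoundedUnder_le.isCoboundedUnder_ge
        linarith [norm_add_le_of_norm_le_one hq (hu1 n) hx s]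
    _ = C := hbound.liminf_eq

theorem garciaFalset_le (hp : p ≠ ⊤) (hX : ∀ i, SchurProperty (X i)) :
    garciaFalset (lp X p) ≤ 2 ^ p.toReal⁻¹ := by
  refine Real.sSup_le ?_ (by positivity)
  rintro _ ⟨x, u, hx, hu1, hu, rfl⟩
  refine le_of_forall_pos_lt_add fun ε hε => ?_
  obtain ⟨s, hs⟩ := (Metric.tendsto_nhds.mp (lp.hasSum_single hp x) ε hε).exists
  rw [dist_comm, dist_eq_norm] at hs
  linarith [liminf_norm_add_le hp hX hu hu1 hx s]

end lp

theorem statement4_general (p : ℝ≥0∞) [Fact (1 ≤ p)] (hp1 : 1 < p) (hp2 : p ≠ ⊤)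
    {I : Type*} (X : I → Type*) [∀ i, NormedAddCommGroup (X i)]
    [∀ i, NormedSpace ℝ (X i)]
    (hSchur : ∀ i, SchurProperty (X i)) :
    garciaFalset (lp X p) < 2 := by
  classical
  have hq : 1 < p.toReal := by
    simpa using (ENNReal.toReal_lt_toReal ENNReal.one_ne_top hp2).mpr hp1
  calc garciaFalset (lp X p) ≤ 2 ^ p.toReal⁻¹ := lp.garciaFalset_le hp2 hSchur
    _ < 2 := Real.rpow_lt_self_of_one_lt one_lt_two (inv_lt_one_of_one_lt₀ hq)

/-- If `1 < p < ∞` and every member of a family of Banach spaces has the Schur property, then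
the García-Falset coefficient of their ℓᵖ-sum is `< 2`. -/
theorem statement4 (p : ℝ≥0∞) [Fact (1 ≤ p)] (hp1 : 1 < p) (hp2 : p ≠ ⊤)
    {I : Type*} (X : I → Type*) [∀ i, NormedAddCommGroup (X i)]
    [∀ i, NormedSpace ℝ (X i)] [∀ i, CompleteSpace (X i)]
    (hSchur : ∀ i, SchurProperty (X i)) :
    garciaFalset (lp X p) < 2 :=
  statement4_general p hp1 hp2 X hSchur
end

section
/- Let N be an absolute, normalised norm on ℝ^m and let X_1, …, X_m be real Banach spaces each having the nonstrict Opial property. Then the E-sum [⊕_{i=1}^m X_i]_E has the nonstrict Opial property; explicitly, whenever for each i = 1,…,m the sequence (x_{n,i})_{n∈ℕ} is weakly null in X_i and y_i ∈ X_i, then limsup_n N(‖x_{n,1}‖, …, ‖x_{n,m}‖) ≤ limsup_n N(‖x_{n,1} − y_1‖, …, ‖x_{n,m} − y_m‖). -/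
/-!
Pass to a subsequence along which `N (‖x i n‖)ᵢ` tends to its limsup and, by compactness in
`ℝ^m`, both `(‖x i n‖)ᵢ` and `(‖x i n - y i‖)ᵢ` converge, to `a` and `b`. The subsequence is still
weakly null componentwise, so the Opial property of each `X i` gives `a ≤ b` coordinatewise, and
absolute norms are monotone on the positive cone, so `N a ≤ N b`. Weakly null sequences are
bounded by uniform boundedness, which provides the compactness.
-/

open Filter Topology MeasureTheory
open scoped ENNReal ZeroAtInfty

open Set Function

section WeaklyNull

variable {X : Type*} [NormedAddCommGroup X] [NormedSpace ℝ X] {u : ℕ → X}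

theorem WeaklyNull.comp_tendsto (hu : WeaklyNull u) {ψ : ℕ → ℕ} (hψ : Tendsto ψ atTop atTop) :
    WeaklyNull (u ∘ ψ) :=
  fun φ => (hu φ).comp hψ

/-- Uniform boundedness for the functionals `u n` on the dual, which is complete even when `X`
is not. -/
theorem WeaklyNull.exists_norm_le (hu : WeaklyNull u) : ∃ C, ∀ n, ‖u n‖ ≤ C := by
  obtain ⟨C, hC⟩ := banach_steinhaus (g := fun n => NormedSpace.inclusionInDoubleDual ℝ X (u n))
    fun φ => (hu φ).norm.bddAbove_range.imp fun _ hC n => hC (mem_range_self n)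
  exact ⟨C, fun n => (NormedSpace.inclusionInDoubleDualLi ℝ).norm_map (u n) ▸ hC n⟩

end WeaklyNull

theorem Seminorm.continuous_of_finiteDimensional {E : Type*} [NormedAddCommGroup E]
    [NormedSpace ℝ E] [FiniteDimensional ℝ E] (p : Seminorm ℝ E) : Continuous p :=
  continuousOn_univ.1 (p.convexOn.continuousOn isOpen_univ)

section AbsoluteSeminorm

variable {ι : Type*} (p : Seminorm ℝ (ι → ℝ))

theorem Seminorm.monotoneOn_update [DecidableEq ι]
    (habs : ∀ a b : ι → ℝ, (∀ i, |a i| = |b i|) → p a = p b) (c : ι → ℝ) (j : ι) :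
    MonotoneOn (fun t => p (update c j t)) (Ici 0) := by
  intro s hs t _ hst
  have hline : ∀ r, AffineMap.lineMap (update c j 0) (update c j 1) r = update c j r := by
    intro r
    ext i
    rcases eq_or_ne i j with rfl | hij <;> simp [AffineMap.lineMap_apply, *]
  have hconvex : ConvexOn ℝ univ fun r => p (update c j r) := by
    simpa [comp_def, hline] using
      p.convexOn.comp_affineMap (AffineMap.lineMap (update c j 0) (update c j 1))
  have heven : p (update c j (-t)) = p (update c j t) := by
    refine habs _ _ fun i => ?_
    rcases eq_or_ne i j with rfl | hij <;> simp [*]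
  -- a convex even function is largest at the endpoints of `[-t, t]`
  simpa [heven] using hconvex.le_max_of_mem_Icc (mem_univ (-t)) (mem_univ t)
    ⟨by linarith [mem_Ici.1 hs], hst⟩

theorem Seminorm.monotoneOn_of_abs [Fintype ι]
    (habs : ∀ a b : ι → ℝ, (∀ i, |a i| = |b i|) → p a = p b) :
    MonotoneOn p (Ici 0) := by
  classical
  intro a ha b _ hab
  have key : ∀ s : Finset ι, p a ≤ p (s.piecewise b a) := by
    intro s
    induction s using Finset.induction_on with
    | empty => simp
    | insert j s hj ih =>
      calc p a ≤ p (s.piecewise b a) := ih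
        _ = p (update (s.piecewise b a) j (a j)) := by
          rw [← Finset.piecewise_eq_of_notMem s b a hj, update_eq_self]
        _ ≤ p ((insert j s).piecewise b a) := by
          rw [Finset.piecewise_insert]
          exact p.monotoneOn_update habs _ j (ha j) ((ha j).trans (hab j)) (hab j)
  simpa using key Finset.univ

end AbsoluteSeminorm

theorem le_limsup_of_tendsto_comp {α β γ : Type*} [ConditionallyCompleteLinearOrder α]
    [TopologicalSpace α] [OrderTopology α] {f : Filter β} {g : Filter γ} [NeBot g]
    {u : β → α} {ψ : γ → β} {c : α} (hψ : Tendsto ψ g f) (hu : IsBoundedUnder (· ≤ ·) f u)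
    (h : Tendsto (u ∘ ψ) g (𝓝 c)) : c ≤ limsup u f := by
  rw [← h.limsup_eq, limsup_comp]
  exact limsup_le_limsup_of_le hψ h.isCoboundedUnder_le hu

theorem limsup_comp_le_of_forall_subseq {ι : Type*} [Fintype ι] {F : (ι → ℝ) → ℝ}
    (hF : Continuous F) (hFmono : MonotoneOn F (Ici 0)) {p q : ℕ → ι → ℝ} {C D : ι → ℝ}
    (hp : ∀ n, p n ∈ Icc 0 C) (hq : ∀ n, q n ∈ Icc 0 D)
    (hpq : ∀ ψ : ℕ → ℕ, Tendsto ψ atTop atTop → ∀ i,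
      limsup (fun n => p (ψ n) i) atTop ≤ limsup (fun n => q (ψ n) i) atTop) :
    limsup (fun n => F (p n)) atTop ≤ limsup (fun n => F (q n)) atTop := by
  have hbdd : ∀ {r : ℕ → ι → ℝ} {R : ι → ℝ}, (∀ n, r n ∈ Icc 0 R) →
      IsBoundedUnder (· ≤ ·) atTop (fun n => F (r n)) ∧
        IsCoboundedUnder (· ≤ ·) atTop (fun n => F (r n)) := by
    intro r R hr
    obtain ⟨M, hM⟩ := isCompact_Icc.bddAbove_image hF.continuousOn
    obtain ⟨M', hM'⟩ := isCompact_Icc.bddBelow_image hF.continuousOn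
    exact ⟨isBoundedUnder_of ⟨M, fun n => hM (mem_image_of_mem F (hr n))⟩,
      isCoboundedUnder_le_of_le atTop fun n => hM' (mem_image_of_mem F (hr n))⟩
  obtain ⟨ψ₀, hψ₀p, hψ₀⟩ := exists_seq_tendsto_limsup (hbdd hp).2 (hbdd hp).1
  obtain ⟨⟨a, b⟩, hab, φ, hφ, hpq_lim⟩ := tendsto_subseq_of_bounded
    ((Metric.isBounded_Icc 0 C).prod (Metric.isBounded_Icc 0 D))
    (x := fun n => (p (ψ₀ n), q (ψ₀ n))) fun n => ⟨hp (ψ₀ n), hq (ψ₀ n)⟩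
  rw [(isClosed_Icc.prod isClosed_Icc).closure_eq] at hab
  set ψ := ψ₀ ∘ φ
  have hψ : Tendsto ψ atTop atTop := hψ₀.comp hφ.tendsto_atTop
  have ha : Tendsto (p ∘ ψ) atTop (𝓝 a) := (continuous_fst.tendsto _).comp hpq_lim
  have hb : Tendsto (q ∘ ψ) atTop (𝓝 b) := (continuous_snd.tendsto _).comp hpq_lim
  have hab_le : a ≤ b := fun i => by
    have hai : Tendsto (fun n => p (ψ n) i) atTop (𝓝 (a i)) := tendsto_pi_nhds.1 ha i
    have hbi : Tendsto (fun n => q (ψ n) i) atTop (𝓝 (b i)) := tendsto_pi_nhds.1 hb i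
    simpa only [hai.limsup_eq, hbi.limsup_eq] using hpq ψ hψ i
  have hFa : limsup (fun n => F (p n)) atTop = F a :=
    tendsto_nhds_unique (hψ₀p.comp hφ.tendsto_atTop) ((hF.tendsto a).comp ha)
  calc limsup (fun n => F (p n)) atTop = F a := hFa
    _ ≤ F b := hFmono hab.1.1 (hab.1.1.trans hab_le) hab_le
    _ ≤ limsup (fun n => F (q n)) atTop :=
      le_limsup_of_tendsto_comp hψ (hbdd hq).1 ((hF.tendsto b).comp hb)

theorem statement10_general (m : ℕ) (N : (Fin m → ℝ) → ℝ)
    (hadd : ∀ a b : Fin m → ℝ, N (a + b) ≤ N a + N b)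
    (hhom : ∀ (c : ℝ) (a : Fin m → ℝ), N (c • a) = |c| * N a)
    (habs : ∀ a b : Fin m → ℝ, (∀ i, |a i| = |b i|) → N a = N b)
    (X : Fin m → Type*) [∀ i, NormedAddCommGroup (X i)] [∀ i, NormedSpace ℝ (X i)]
    (hOp : ∀ i, ∀ u : ℕ → X i, WeaklyNull u → ∀ z : X i,
      limsup (fun n => ‖u n‖) atTop ≤ limsup (fun n => ‖u n - z‖) atTop)
    (x : ∀ i, ℕ → X i) (hx : ∀ i, WeaklyNull (x i)) (y : ∀ i, X i) :
    limsup (fun n => N fun i => ‖x i n‖) atTop ≤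
      limsup (fun n => N fun i => ‖x i n - y i‖) atTop := by
  let p : Seminorm ℝ (Fin m → ℝ) := .of N hadd hhom
  choose C hC using fun i => (hx i).exists_norm_le
  exact limsup_comp_le_of_forall_subseq p.continuous_of_finiteDimensional
    (p.monotoneOn_of_abs habs) (C := C) (D := fun i => C i + ‖y i‖)
    (fun n => ⟨fun i => norm_nonneg _, fun i => hC i n⟩)
    (fun n => ⟨fun i => norm_nonneg _, fun i => (norm_sub_le _ _).trans (by linarith [hC i n])⟩)
    fun ψ hψ i => hOp i _ ((hx i).comp_tendsto hψ) (y i)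

/-- If `N` is an absolute normalised norm on `ℝ^m` and `X 1, …, X m` are Banach spaces with the
nonstrict Opial property, then the `E`-sum has the nonstrict Opial property, stated explicitly
in terms of `N` and componentwise weakly null sequences. -/
theorem statement10 (m : ℕ) (N : (Fin m → ℝ) → ℝ)
    (hadd : ∀ a b : Fin m → ℝ, N (a + b) ≤ N a + N b)
    (hhom : ∀ (c : ℝ) (a : Fin m → ℝ), N (c • a) = |c| * N a)
    (hdef : ∀ a : Fin m → ℝ, N a = 0 → a = 0)
    (habs : ∀ a b : Fin m → ℝ, (∀ i, |a i| = |b i|) → N a = N b)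
    (hnormalised : ∀ i, N (Pi.single i 1) = 1)
    (X : Fin m → Type*) [∀ i, NormedAddCommGroup (X i)] [∀ i, NormedSpace ℝ (X i)]
    [∀ i, CompleteSpace (X i)]
    (hOp : ∀ i, ∀ u : ℕ → X i, WeaklyNull u → ∀ z : X i,
      limsup (fun n => ‖u n‖) atTop ≤ limsup (fun n => ‖u n - z‖) atTop)
    (x : ∀ i, ℕ → X i) (hx : ∀ i, WeaklyNull (x i)) (y : ∀ i, X i) :
    limsup (fun n => N fun i => ‖x i n‖) atTop ≤
      limsup (fun n => N fun i => ‖x i n - y i‖) atTop :=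
  statement10_general m N hadd hhom habs X hOp x hx y
end

section
/- Let N be a strictly monotone, absolute, normalised norm on ℝ^m and let X_1, …, X_m be real Banach spaces each having the uniform Opial property. Then the E-sum [⊕_{i=1}^m X_i]_E has the uniform Opial property; explicitly, for every ε > 0 and R > 0 there is η > 0 such that whenever for each i = 1,…,m the sequence (x_{n,i})_{n∈ℕ} is weakly null in X_i with limsup_n N(‖x_{n,1}‖,…,‖x_{n,m}‖) ≤ R, and y_i ∈ X_i with N(‖y_1‖,…,‖y_m‖) ≥ ε, then η + liminf_n N(‖x_{n,1}‖,…,‖x_{n,m}‖) ≤ liminf_n N(‖x_{n,1} − y_1‖,…,‖x_{n,m} − y_m‖). -/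
open Filter Topology MeasureTheory
open scoped ENNReal ZeroAtInfty

/-! Pass to a subsequence along which `N (‖x n - y‖)` tends to its `liminf` and all coordinate
norms converge, `‖x i n‖ → a i` and `‖x i n - y i‖ → a' i`. The Opial property of each `X i` gives
`a ≤ a'`, and in a coordinate `i₀` with `‖y i₀‖ ≥ ε / (m + 1)` (one exists because `N` is dominated
by the `ℓ¹` norm) the uniform Opial property gives `a i₀ + η i₀ ≤ a' i₀`. By strict monotonicity
`N (a + η i • e i) - N a` is positive, hence, by continuity and compactness of `[0, R]^m`, bounded
below by some `δ > 0`; so `N a' ≥ N a + δ ≥ liminf N (‖x n‖) + δ`. -/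

structure IsAbsoluteNormalisedNorm {ι : Type*} [DecidableEq ι] (N : (ι → ℝ) → ℝ) : Prop where
  add_le : ∀ a b, N (a + b) ≤ N a + N b
  smul_eq : ∀ (c : ℝ) a, N (c • a) = |c| * N a
  eq_of_abs_eq : ∀ a b, (∀ i, |a i| = |b i|) → N a = N b
  single_one : ∀ i, N (Pi.single i 1) = 1

namespace IsAbsoluteNormalisedNorm

variable {ι : Type*} [DecidableEq ι] {N : (ι → ℝ) → ℝ}

def toSeminorm (hN : IsAbsoluteNormalisedNorm N) : Seminorm ℝ (ι → ℝ) :=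
  Seminorm.of N hN.add_le fun c a => by rw [hN.smul_eq, Real.norm_eq_abs]

lemma map_single (hN : IsAbsoluteNormalisedNorm N) (i : ι) (c : ℝ) : N (Pi.single i c) = |c| := by
  rw [show Pi.single i c = c • (Pi.single i 1 : ι → ℝ) by simp [← Pi.single_smul], hN.smul_eq,
    hN.single_one, mul_one]

lemma update_le_update (hN : IsAbsoluteNormalisedNorm N) (c : ι → ℝ) (i : ι) {t s : ℝ}
    (h : |t| ≤ |s|) :
    N (Function.update c i t) ≤ N (Function.update c i s) := by
  rcases eq_or_ne s 0 with rfl | hs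
  · rw [abs_zero, abs_nonpos_iff] at h
    rw [h]
  -- `t = lam * s + (1 - lam) * (-s)`, and flipping the sign of `s` does not change `N`
  set lam := (1 + t / s) / 2 with hlam
  have hts : |t / s| ≤ 1 := by rwa [abs_div, div_le_one (abs_pos.2 hs)]
  have hlam₀ : 0 ≤ lam := by rw [hlam]; linarith [neg_abs_le (t / s)]
  have hlam₁ : 0 ≤ 1 - lam := by rw [hlam]; linarith [le_abs_self (t / s)]
  have hsplit : Function.update c i t =
      lam • Function.update c i s + (1 - lam) • Function.update c i (-s) := by
    ext j
    rcases eq_or_ne j i with rfl | hj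
    · simp only [Pi.add_apply, Pi.smul_apply, Function.update_self, smul_eq_mul, lam]
      field_simp
      ring
    · simp only [Pi.add_apply, Pi.smul_apply, Function.update_of_ne hj, smul_eq_mul]
      ring
  have hflip : N (Function.update c i (-s)) = N (Function.update c i s) := by
    refine hN.eq_of_abs_eq _ _ fun j => ?_
    rcases eq_or_ne j i with rfl | hj
    · simp
    · simp [Function.update_of_ne hj]
  calc N (Function.update c i t)
      ≤ lam * N (Function.update c i s) + (1 - lam) * N (Function.update c i (-s)) := by
        rw [hsplit]
        refine (hN.add_le _ _).trans_eq ?_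
        rw [hN.smul_eq, hN.smul_eq, abs_of_nonneg hlam₀, abs_of_nonneg hlam₁]
    _ = N (Function.update c i s) := by rw [hflip]; ring

variable [Fintype ι]

lemma continuous (hN : IsAbsoluteNormalisedNorm N) : Continuous N :=
  continuousOn_univ.mp (hN.toSeminorm.convexOn.continuousOn isOpen_univ)

lemma le_sum_abs (hN : IsAbsoluteNormalisedNorm N) (a : ι → ℝ) : N a ≤ ∑ i, |a i| := by
  calc N a = N (∑ i, Pi.single i (a i)) := by rw [Finset.univ_sum_single]
    _ ≤ ∑ i, N (Pi.single i (a i)) :=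
      Finset.le_sum_of_subadditive N (map_zero hN.toSeminorm).le hN.add_le _ _
    _ = ∑ i, |a i| := by simp only [hN.map_single]

lemma mono (hN : IsAbsoluteNormalisedNorm N) {a b : ι → ℝ} (h : ∀ i, |a i| ≤ |b i|) :
    N a ≤ N b := by
  suffices ∀ s : Finset ι, N (s.piecewise a b) ≤ N b by simpa using this Finset.univ
  intro s
  induction s using Finset.induction_on with
  | empty => simp
  | insert i s hi ih =>
    rw [Finset.piecewise_insert]
    calc N (Function.update (s.piecewise a b) i (a i))
        ≤ N (Function.update (s.piecewise a b) i (b i)) := hN.update_le_update _ _ (h i)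
      _ = N (s.piecewise a b) := by
        rw [Function.update_eq_self_iff.2 (Finset.piecewise_eq_of_notMem s a b hi).symm]
      _ ≤ N b := ih

lemma abs_apply_le (hN : IsAbsoluteNormalisedNorm N) (a : ι → ℝ) (i : ι) : |a i| ≤ N a := by
  rw [← hN.map_single i (a i)]
  refine hN.mono fun j => ?_
  rcases eq_or_ne j i with rfl | hj
  · simp
  · simp [hj]

lemma exists_div_le_abs (hN : IsAbsoluteNormalisedNorm N) {ε : ℝ} (hε : 0 < ε) {a : ι → ℝ}
    (ha : ε ≤ N a) :
    ∃ i, ε / (Fintype.card ι + 1) ≤ |a i| := by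
  by_contra! hsmall
  have hsum : ∑ i, |a i| ≤ Fintype.card ι * (ε / (Fintype.card ι + 1)) := by
    simpa using Finset.sum_le_sum fun i (_ : i ∈ Finset.univ) => (hsmall i).le
  have hlt : Fintype.card ι * (ε / (Fintype.card ι + 1)) < ε := by
    rw [mul_div_assoc', div_lt_iff₀ (by positivity)]
    linarith
  linarith [hN.le_sum_abs a]

lemma lt_add_single (hN : IsAbsoluteNormalisedNorm N)
    (hstrict : ∀ a b, N a = N b → (∀ i, |a i| ≤ |b i|) → ∀ i, |a i| = |b i|)
    {a : ι → ℝ} {i : ι} (hai : 0 ≤ a i) {t : ℝ} (ht : 0 < t) : N a < N (a + Pi.single i t) := by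
  have hle : ∀ j, |a j| ≤ |(a + Pi.single i t : ι → ℝ) j| := by
    intro j
    rcases eq_or_ne j i with rfl | hj
    · simp only [Pi.add_apply, Pi.single_eq_same]
      rw [abs_of_nonneg hai, abs_of_nonneg (by linarith)]
      linarith
    · simp [hj]
  refine (hN.mono hle).lt_of_ne fun heq => ?_
  have := hstrict _ _ heq hle i
  simp only [Pi.add_apply, Pi.single_eq_same] at this
  rw [abs_of_nonneg hai, abs_of_nonneg (by linarith)] at this
  linarith

lemma exists_pos_add_le_add_single (hN : IsAbsoluteNormalisedNorm N)
    (hstrict : ∀ a b, N a = N b → (∀ i, |a i| ≤ |b i|) → ∀ i, |a i| = |b i|)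
    (i : ι) {t : ℝ} (ht : 0 < t) {R : ℝ} (hR : 0 ≤ R) :
    ∃ δ > 0, ∀ a ∈ Set.Icc (0 : ι → ℝ) (fun _ => R), N a + δ ≤ N (a + Pi.single i t) := by
  have hgap : Continuous fun a => N (a + Pi.single i t) - N a :=
    (hN.continuous.comp (continuous_id.add continuous_const)).sub hN.continuous
  obtain ⟨a₀, ha₀, hmin⟩ :=
    isCompact_Icc.exists_isMinOn (Set.nonempty_Icc.2 fun _ => hR) hgap.continuousOn
  refine ⟨_, sub_pos.2 (hN.lt_add_single hstrict (ha₀.1 i) ht), fun a ha => ?_⟩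
  have := isMinOn_iff.1 hmin a ha
  linarith

lemma exists_pos_add_le (hN : IsAbsoluteNormalisedNorm N)
    (hstrict : ∀ a b, N a = N b → (∀ i, |a i| ≤ |b i|) → ∀ i, |a i| = |b i|)
    {t : ι → ℝ} (ht : ∀ i, 0 < t i) {R : ℝ} (hR : 0 ≤ R) :
    ∃ δ > 0, ∀ i (a b : ι → ℝ), 0 ≤ a → (∀ j, a j ≤ R) → a ≤ b → a i + t i ≤ b i →
      N a + δ ≤ N b := by
  cases isEmpty_or_nonempty ι
  · exact ⟨1, one_pos, fun i => isEmptyElim i⟩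
  choose δ hδ_pos hδ using fun i => hN.exists_pos_add_le_add_single hstrict i (ht i) hR
  obtain ⟨i₀, hi₀⟩ := Finite.exists_min δ
  refine ⟨δ i₀, hδ_pos i₀, fun i a b ha₀ haR hab habi => ?_⟩
  calc N a + δ i₀ ≤ N a + δ i := by linarith [hi₀ i]
    _ ≤ N (a + Pi.single i (t i)) := hδ i a ⟨ha₀, haR⟩
    _ ≤ N b := hN.mono fun j => by
      have ha₀j : 0 ≤ a j := ha₀ j
      rcases eq_or_ne j i with rfl | hj
      · simp only [Pi.add_apply, Pi.single_eq_same]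
        rw [abs_of_nonneg (by linarith [ht j]), abs_of_nonneg (by linarith [ht j])]
        exact habi
      · simp only [Pi.add_apply, Pi.single_eq_of_ne hj, add_zero]
        rw [abs_of_nonneg ha₀j, abs_of_nonneg (ha₀j.trans (hab j))]
        exact hab j

end IsAbsoluteNormalisedNorm

namespace WeaklyNull

variable {X : Type*} [NormedAddCommGroup X] [NormedSpace ℝ X] {u : ℕ → X}

lemma comp_tendsto_s12 (hu : WeaklyNull u) {θ : ℕ → ℕ} (hθ : Tendsto θ atTop atTop) :
    WeaklyNull (u ∘ θ) :=
  fun φ => (hu φ).comp hθ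

/-- Uniform boundedness principle, applied to `u` as a sequence in the bidual. -/
lemma exists_norm_le_s12 (hu : WeaklyNull u) : ∃ C, ∀ n, ‖u n‖ ≤ C := by
  have hbdd : ∀ φ : StrongDual ℝ X, ∃ C, ∀ n,
      ‖NormedSpace.inclusionInDoubleDual ℝ X (u n) φ‖ ≤ C := by
    intro φ
    obtain ⟨C, hC⟩ := (hu φ).norm.bddAbove_range
    exact ⟨C, fun n => hC (Set.mem_range_self n)⟩
  obtain ⟨C, hC⟩ := banach_steinhaus hbdd
  exact ⟨C, fun n => (NormedSpace.inclusionInDoubleDualLi ℝ).norm_map (u n) ▸ hC n⟩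

end WeaklyNull

def IsOpialModulus (X : Type*) [NormedAddCommGroup X] [NormedSpace ℝ X] (ε R η : ℝ) : Prop :=
  ∀ (z : X) (u : ℕ → X), WeaklyNull u → ε ≤ ‖z‖ → limsup (fun n => ‖u n‖) atTop ≤ R →
    η + liminf (fun n => ‖u n‖) atTop ≤ liminf (fun n => ‖u n - z‖) atTop

def UniformOpial (X : Type*) [NormedAddCommGroup X] [NormedSpace ℝ X] : Prop :=
  ∀ ε R : ℝ, 0 < ε → 0 < R → ∃ η > (0 : ℝ), IsOpialModulus X ε R η

section Opial

variable {X : Type*} [NormedAddCommGroup X] [NormedSpace ℝ X] {u : ℕ → X} {z : X} {a a' : ℝ}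

lemma IsOpialModulus.add_le_of_tendsto {ε R η : ℝ} (hη : IsOpialModulus X ε R η)
    (hu : WeaklyNull u) (hz : ε ≤ ‖z‖) (haR : a ≤ R)
    (ha : Tendsto (fun n => ‖u n‖) atTop (𝓝 a)) (ha' : Tendsto (fun n => ‖u n - z‖) atTop (𝓝 a')) :
    η + a ≤ a' := by
  simpa only [ha.liminf_eq, ha'.liminf_eq] using hη z u hu hz (ha.limsup_eq.trans_le haR)

lemma UniformOpial.le_of_tendsto (hX : UniformOpial X) (hu : WeaklyNull u)
    (ha : Tendsto (fun n => ‖u n‖) atTop (𝓝 a)) (ha' : Tendsto (fun n => ‖u n - z‖) atTop (𝓝 a')) :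
    a ≤ a' := by
  rcases eq_or_ne z 0 with rfl | hz
  · simp only [sub_zero] at ha'
    exact (tendsto_nhds_unique ha ha').le
  have ha₀ : 0 ≤ a := ge_of_tendsto' ha fun n => norm_nonneg _
  obtain ⟨η, hη_pos, hη⟩ := hX ‖z‖ (a + 1) (norm_pos_iff.2 hz) (by linarith)
  linarith [hη.add_le_of_tendsto hu le_rfl (by linarith) ha ha']

end Opial

lemma IsCompact.exists_tendsto_subseq_liminf {E : Type*} [TopologicalSpace E]
    [FirstCountableTopology E] {K : Set E} (hK : IsCompact K) {F : E → ℝ} (hF : Continuous F)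
    {v : ℕ → E} (hv : ∀ n, v n ∈ K) :
    ∃ w ∈ K, ∃ θ : ℕ → ℕ, Tendsto θ atTop atTop ∧ Tendsto (v ∘ θ) atTop (𝓝 w) ∧
      F w = liminf (F ∘ v) atTop := by
  obtain ⟨B, hB⟩ := hK.exists_bound_of_continuousOn hF.continuousOn
  have hbdd : ∀ n, |F (v n)| ≤ B := fun n => hB _ (hv n)
  obtain ⟨θ₁, hθ₁F, hθ₁⟩ := exists_seq_tendsto_liminf (u := F ∘ v) (f := atTop)
    (isBoundedUnder_of ⟨B, fun n => (le_abs_self _).trans (hbdd n)⟩).isCoboundedUnder_ge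
    (isBoundedUnder_of ⟨-B, fun n => neg_le_of_abs_le (hbdd n)⟩)
  obtain ⟨w, hwK, ψ, hψ, hvψ⟩ := hK.tendsto_subseq fun n => hv (θ₁ n)
  refine ⟨w, hwK, θ₁ ∘ ψ, hθ₁.comp hψ.tendsto_atTop, hvψ, ?_⟩
  exact tendsto_nhds_unique ((hF.tendsto w).comp hvψ) (hθ₁F.comp hψ.tendsto_atTop)

lemma liminf_add_le_liminf_of_tendsto_subseq {ι : Type*} [Fintype ι] {N : (ι → ℝ) → ℝ}
    (hN : Continuous N) {p q : ℕ → ι → ℝ} {C : ι → ℝ}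
    (hp : ∀ n, p n ∈ Set.Icc 0 C) (hq : ∀ n, q n ∈ Set.Icc 0 C) {R δ : ℝ}
    (hR : limsup (N ∘ p) atTop ≤ R)
    (h : ∀ (θ : ℕ → ℕ) (a a' : ι → ℝ), Tendsto θ atTop atTop → Tendsto (p ∘ θ) atTop (𝓝 a) →
      Tendsto (q ∘ θ) atTop (𝓝 a') → N a ≤ R → N a + δ ≤ N a') :
    liminf (N ∘ p) atTop + δ ≤ liminf (N ∘ q) atTop := by
  obtain ⟨⟨a, a'⟩, -, θ, hθ, hpq, hNa'⟩ :=
    (isCompact_Icc.prod isCompact_Icc).exists_tendsto_subseq_liminf (hN.comp continuous_snd)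
      (v := fun n => (p n, q n)) fun n => ⟨hp n, hq n⟩
  have ha : Tendsto (p ∘ θ) atTop (𝓝 a) := (continuous_fst.tendsto _).comp hpq
  have ha' : Tendsto (q ∘ θ) atTop (𝓝 a') := (continuous_snd.tendsto _).comp hpq
  have hNa : Tendsto ((N ∘ p) ∘ θ) atTop (𝓝 (N a)) := (hN.tendsto a).comp ha
  obtain ⟨B, hB⟩ := isCompact_Icc.exists_bound_of_continuousOn hN.continuousOn (s := Set.Icc 0 C)
  have hbdd : ∀ n, |N (p n)| ≤ B := fun n => hB _ (hp n)
  have hle : ∀ {l : Filter ℕ}, IsBoundedUnder (· ≤ ·) l (N ∘ p) :=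
    isBoundedUnder_of ⟨B, fun n => (le_abs_self _).trans (hbdd n)⟩
  have hge : ∀ {l : Filter ℕ}, IsBoundedUnder (· ≥ ·) l (N ∘ p) :=
    isBoundedUnder_of ⟨-B, fun n => neg_le_of_abs_le (hbdd n)⟩
  have hliminf : liminf (N ∘ p) atTop ≤ N a :=
    (hθ.liminf_le_liminf_comp hle.isCoboundedUnder_ge hge).trans_eq hNa.liminf_eq
  have haR : N a ≤ R :=
    hNa.limsup_eq.symm.trans_le ((hθ.limsup_comp_le_limsup hge.isCoboundedUnder_le hle).trans hR)
  have hNa'_eq : N a' = liminf (N ∘ q) atTop := hNa'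
  linarith [h θ a a' hθ ha ha' haR]

lemma IsAbsoluteNormalisedNorm.add_le_of_tendsto {ι : Type*} [Fintype ι] [DecidableEq ι]
    {N : (ι → ℝ) → ℝ} (hN : IsAbsoluteNormalisedNorm N) {X : ι → Type*}
    [∀ i, NormedAddCommGroup (X i)] [∀ i, NormedSpace ℝ (X i)] (hX : ∀ i, UniformOpial (X i))
    {ε R δ : ℝ} {η : ι → ℝ} (hη : ∀ i, IsOpialModulus (X i) (ε / (Fintype.card ι + 1)) R (η i))
    (hδ : ∀ i (a b : ι → ℝ), 0 ≤ a → (∀ j, a j ≤ R) → a ≤ b → a i + η i ≤ b i → N a + δ ≤ N b)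
    (hε : 0 < ε) {y : ∀ i, X i} (hy : ε ≤ N fun i => ‖y i‖) {u : ∀ i, ℕ → X i}
    (hu : ∀ i, WeaklyNull (u i)) {a a' : ι → ℝ}
    (ha : ∀ i, Tendsto (fun n => ‖u i n‖) atTop (𝓝 (a i)))
    (ha' : ∀ i, Tendsto (fun n => ‖u i n - y i‖) atTop (𝓝 (a' i))) (haR : N a ≤ R) :
    N a + δ ≤ N a' := by
  obtain ⟨i₀, hi₀⟩ := hN.exists_div_le_abs hε hy
  rw [abs_norm] at hi₀
  have ha₀ : 0 ≤ a := fun i => ge_of_tendsto' (ha i) fun n => norm_nonneg _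
  have haR' : ∀ i, a i ≤ R := fun i =>
    (le_abs_self _).trans ((hN.abs_apply_le a i).trans haR)
  exact hδ i₀ a a' ha₀ haR' (fun i => (hX i).le_of_tendsto (hu i) (ha i) (ha' i))
    ((add_comm _ _).trans_le ((hη i₀).add_le_of_tendsto (hu i₀) hi₀ (haR' i₀) (ha i₀) (ha' i₀)))

theorem statement12_general (m : ℕ) (N : (Fin m → ℝ) → ℝ)
    (hadd : ∀ a b : Fin m → ℝ, N (a + b) ≤ N a + N b)
    (hhom : ∀ (c : ℝ) (a : Fin m → ℝ), N (c • a) = |c| * N a)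
    (habs : ∀ a b : Fin m → ℝ, (∀ i, |a i| = |b i|) → N a = N b)
    (hnormalised : ∀ i, N (Pi.single i 1) = 1)
    (hstrictmono : ∀ a b : Fin m → ℝ, N a = N b → (∀ i, |a i| ≤ |b i|) → ∀ i, |a i| = |b i|)
    (X : Fin m → Type*) [∀ i, NormedAddCommGroup (X i)] [∀ i, NormedSpace ℝ (X i)]
    (hOp : ∀ i, ∀ ε R : ℝ, 0 < ε → 0 < R → ∃ η > (0 : ℝ), ∀ (z : X i) (u : ℕ → X i),
      WeaklyNull u → ε ≤ ‖z‖ → limsup (fun n => ‖u n‖) atTop ≤ R →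
      η + liminf (fun n => ‖u n‖) atTop ≤ liminf (fun n => ‖u n - z‖) atTop) :
    ∀ ε R : ℝ, 0 < ε → 0 < R → ∃ η > (0 : ℝ), ∀ (x : ∀ i, ℕ → X i) (y : ∀ i, X i),
      (∀ i, WeaklyNull (x i)) → ε ≤ N (fun i => ‖y i‖) →
      limsup (fun n => N fun i => ‖x i n‖) atTop ≤ R →
      η + liminf (fun n => N fun i => ‖x i n‖) atTop ≤
        liminf (fun n => N fun i => ‖x i n - y i‖) atTop := by
  intro ε R hε hR
  have hN : IsAbsoluteNormalisedNorm N := ⟨hadd, hhom, habs, hnormalised⟩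
  choose η hη_pos hη using fun i => hOp i (ε / (Fintype.card (Fin m) + 1)) R (by positivity) hR
  obtain ⟨δ, hδ_pos, hδ⟩ := hN.exists_pos_add_le hstrictmono hη_pos hR.le
  refine ⟨δ, hδ_pos, fun x y hx hy hlimsup => ?_⟩
  choose C hC using fun i => (hx i).exists_norm_le_s12
  rw [add_comm]
  refine liminf_add_le_liminf_of_tendsto_subseq hN.continuous (C := C + fun i => ‖y i‖)
    (p := fun n i => ‖x i n‖) (q := fun n i => ‖x i n - y i‖)
    (fun n => ⟨fun i => norm_nonneg _, fun i => le_add_of_le_of_nonneg (hC i n) (norm_nonneg _)⟩)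
    (fun n => ⟨fun i => norm_nonneg _,
      fun i => (norm_sub_le _ _).trans (add_le_add_left (hC i n) _)⟩)
    hlimsup fun θ a a' hθ ha ha' haR => ?_
  exact hN.add_le_of_tendsto hOp hη hδ hε hy (u := fun i => x i ∘ θ)
    (fun i => (hx i).comp_tendsto_s12 hθ) (tendsto_pi_nhds.1 ha) (tendsto_pi_nhds.1 ha') haR

/-- If `N` is a strictly monotone absolute normalised norm on `ℝ^m` and `X 1, …, X m` are Banach
spaces with the uniform Opial property, then the `E`-sum has the uniform Opial property, stated
explicitly in terms of `N` and componentwise weakly null sequences. -/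
theorem statement12 (m : ℕ) (N : (Fin m → ℝ) → ℝ)
    (hadd : ∀ a b : Fin m → ℝ, N (a + b) ≤ N a + N b)
    (hhom : ∀ (c : ℝ) (a : Fin m → ℝ), N (c • a) = |c| * N a)
    (hdef : ∀ a : Fin m → ℝ, N a = 0 → a = 0)
    (habs : ∀ a b : Fin m → ℝ, (∀ i, |a i| = |b i|) → N a = N b)
    (hnormalised : ∀ i, N (Pi.single i 1) = 1)
    (hstrictmono : ∀ a b : Fin m → ℝ, N a = N b → (∀ i, |a i| ≤ |b i|) → ∀ i, |a i| = |b i|)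
    (X : Fin m → Type*) [∀ i, NormedAddCommGroup (X i)] [∀ i, NormedSpace ℝ (X i)]
    [∀ i, CompleteSpace (X i)]
    (hOp : ∀ i, ∀ ε R : ℝ, 0 < ε → 0 < R → ∃ η > (0 : ℝ), ∀ (z : X i) (u : ℕ → X i),
      WeaklyNull u → ε ≤ ‖z‖ → limsup (fun n => ‖u n‖) atTop ≤ R →
      η + liminf (fun n => ‖u n‖) atTop ≤ liminf (fun n => ‖u n - z‖) atTop) :
    ∀ ε R : ℝ, 0 < ε → 0 < R → ∃ η > (0 : ℝ), ∀ (x : ∀ i, ℕ → X i) (y : ∀ i, X i),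
      (∀ i, WeaklyNull (x i)) → ε ≤ N (fun i => ‖y i‖) →
      limsup (fun n => N fun i => ‖x i n‖) atTop ≤ R →
      η + liminf (fun n => N fun i => ‖x i n‖) atTop ≤
        liminf (fun n => N fun i => ‖x i n - y i‖) atTop :=
  statement12_general m N hadd hhom habs hnormalised hstrictmono X hOp
end
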